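/- Fix a positive integer ρ and set α_n = β_{(n,ρn)} for n ≥ 1. Then the limit α = lim_{n→∞} α_n^{1/n} exists and satisfies 1 ≤ α ≤ 4^{1+ρ}. -/

import Mathlib

open MeasureTheory Filter

/-- An edge of the square lattice `ℤ × ℤ`, encoded by its lower-left endpoint `base`
together with its direction: a horizontal edge joins `base` to `base + (1,0)`,
a vertical edge joins `base` to `base + (0,1)`. This encodes exactly the set
`𝔼` of nearest-neighbour edges of `ℤ²`. -/
structure LatticeEdge where
  base : ℤ × ℤ
  horiz : Bool
deriving DecidableEq

namespace LatticeEdge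

/-- First endpoint of an edge. -/
def fst (e : LatticeEdge) : ℤ × ℤ := e.base

/-- Second endpoint of an edge. -/
def snd (e : LatticeEdge) : ℤ × ℤ :=
  if e.horiz then (e.base.1 + 1, e.base.2) else (e.base.1, e.base.2 + 1)

/-- The two endpoints of an edge, as an unordered pair. -/
def ends (e : LatticeEdge) : Sym2 (ℤ × ℤ) := s(e.fst, e.snd)

end LatticeEdge

/-- The graph on `ℤ²` whose edges are the lattice edges belonging to `S`. -/
def graphOf (S : Set LatticeEdge) : SimpleGraph (ℤ × ℤ) where
  Adj u v := u ≠ v ∧ ∃ e ∈ S, e.ends = s(u, v)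
  symm := by
    constructor
    intro u v h
    obtain ⟨hne, e, he, hs⟩ := h
    exact ⟨hne.symm, e, he, hs.trans (Sym2.eq_swap)⟩
  loopless := by
    constructor
    intro u h
    exact h.1 rfl

/-- The graph `(ℤ², 𝔼 ∖ γ)` obtained by deleting the edges of `γ`. -/
def complGraph (γ : Finset LatticeEdge) : SimpleGraph (ℤ × ℤ) :=
  graphOf {e | e ∉ γ}

/-- A finite set `γ` of lattice edges is a *contour* if the graph `(ℤ², 𝔼 ∖ γ)` has
exactly one finite connected component, and `γ` is minimal with this property:
for every `e ∈ γ`, the graph `(ℤ², 𝔼 ∖ (γ ∖ {e}))` has no finite connected component. -/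
def IsContour (γ : Finset LatticeEdge) : Prop :=
  (∃! C : (complGraph γ).ConnectedComponent, C.supp.Finite) ∧
  ∀ e ∈ γ, ∀ C : (graphOf {f | f ∉ γ ∨ f = e}).ConnectedComponent, ¬ C.supp.Finite

/-- A contour `γ` *surrounds* a set `X ⊆ ℤ²` of vertices if `X` is contained in the
vertex set `I_γ` of the (unique) finite connected component of `(ℤ², 𝔼 ∖ γ)`. -/
def Surrounds (γ : Finset LatticeEdge) (X : Set (ℤ × ℤ)) : Prop :=
  IsContour γ ∧ ∃ C : (complGraph γ).ConnectedComponent, C.supp.Finite ∧ X ⊆ C.supp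

/-- `Γ^n_X` : the set of contours of cardinality `n` surrounding `X`. -/
def GammaN (X : Set (ℤ × ℤ)) (n : ℕ) : Set (Finset LatticeEdge) :=
  {γ | Surrounds γ X ∧ γ.card = n}

/-- `‖x‖ = 2(x₁ + x₂ + 2)`, the cardinality of a minimal contour surrounding `{0, x}`. -/
def normC (x : ℤ × ℤ) : ℕ := (2 * (x.1 + x.2 + 2)).toNat

/-- `β_x` : the number of minimal contours surrounding `{0, x}`. -/
noncomputable def betaX (x : ℤ × ℤ) : ℕ := Nat.card ↥(GammaN {0, x} (normC x))

/-- Number of horizontal edges of `γ`, i.e. `|γ ∩ 𝔼ʰ|`. -/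
def hCount (γ : Finset LatticeEdge) : ℕ := (γ.filter fun e => e.horiz = true).card

/-- Number of vertical edges of `γ`, i.e. `|γ ∩ 𝔼ᵛ|`. -/
def vCount (γ : Finset LatticeEdge) : ℕ := (γ.filter fun e => e.horiz = false).card

/-- The dual edge `e*` of a lattice edge `e`.  We identify the dual lattice
`ℤ² + (1/2, 1/2)` with `ℤ²` via `(a,b) ↦ (a + 1/2, b + 1/2)`; under this
identification the dual edge crossing the horizontal edge `(a,b)–(a+1,b)` joins
`(a, b-1)` to `(a, b)` (a vertical dual edge), and the dual edge crossing the
vertical edge `(a,b)–(a,b+1)` joins `(a-1, b)` to `(a, b)` (a horizontal dual edge). -/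
def dualEdge (e : LatticeEdge) : LatticeEdge :=
  if e.horiz then ⟨(e.base.1, e.base.2 - 1), false⟩ else ⟨(e.base.1 - 1, e.base.2), true⟩

/-- A finite set `S` of (dual) lattice edges is a *circuit* if it is the edge set of a
closed self-avoiding path: there are `n ≥ 3` distinct vertices `c 0, …, c (n-1)`,
cyclically consecutive ones being joined by an edge of `S`, and every edge of `S` arising
this way. -/
def IsCircuit (S : Finset LatticeEdge) : Prop :=
  ∃ n : ℕ, 3 ≤ n ∧ ∃ c : ZMod n → ℤ × ℤ, Function.Injective c ∧
    (∀ i : ZMod n, ∃ e ∈ S, e.ends = s(c i, c (i + 1))) ∧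
    (∀ e ∈ S, ∃ i : ZMod n, e.ends = s(c i, c (i + 1)))

/-- The dual edge `e_k*` joining `(k - 1/2, -1/2)` to `(k - 1/2, 1/2)`; in our
identification of the dual lattice with `ℤ²` this is the vertical dual edge with base
`(k-1, -1)`, i.e. the dual of the horizontal edge `(k-1, 0)–(k, 0)`. -/
def ekStar (k : ℤ) : LatticeEdge := ⟨(k - 1, -1), false⟩

/-- The probability that the edge `e` is open: `p_h` for horizontal edges and `p_v`
for vertical ones. -/
noncomputable def edgeProb (ph pv : ℝ) (e : LatticeEdge) : ℝ := if e.horiz then ph else pv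

/-- `P` is the Bernoulli product measure `P_{(p_h, p_v)}` on configurations
`ω ∈ {0,1}^𝔼` (encoded as `LatticeEdge → Bool`, `true` = open): it is a probability
measure and, for every finite set of edges, the states of those edges are independent
Bernoulli variables with the correct parameters.  These cylinder probabilities
characterize the product measure uniquely. -/
def IsBernoulliProduct (ph pv : ℝ) (P : Measure (LatticeEdge → Bool)) : Prop :=
  IsProbabilityMeasure P ∧
    ∀ (F : Finset LatticeEdge) (σ : LatticeEdge → Bool),
      P {ω | ∀ e ∈ F, ω e = σ e} =
        ∏ e ∈ F, ENNReal.ofReal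
          (if σ e then edgeProb ph pv e else 1 - edgeProb ph pv e)

/-- The graph of open edges of the configuration `ω`. -/
def openGraph (ω : LatticeEdge → Bool) : SimpleGraph (ℤ × ℤ) :=
  graphOf {e | ω e = true}

/-- `x` and `y` belong to the same finite open cluster of the configuration `ω`. -/
def SameFiniteCluster (ω : LatticeEdge → Bool) (x y : ℤ × ℤ) : Prop :=
  ∃ C : (openGraph ω).ConnectedComponent, x ∈ C.supp ∧ y ∈ C.supp ∧ C.supp.Finite

/-- The truncated (finite) connectivity `τ^f_p(x,y)`: the probability that `x` and `y`
belong to the same finite open cluster. -/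
noncomputable def tauF (P : Measure (LatticeEdge → Bool)) (x y : ℤ × ℤ) : ℝ :=
  (P {ω | SameFiniteCluster ω x y}).toReal

/-- The box `V_N = ([-N,N] × [-N,N]) ∩ ℤ²`. -/
def VN (N : ℕ) : Set (ℤ × ℤ) := {v | |v.1| ≤ (N : ℤ) ∧ |v.2| ≤ (N : ℤ)}

/-- The interior vertex boundary `∂_v^int V_N = {x ∈ V_N : d(x, ℤ² ∖ V_N) = 1}`. -/
def intBdry (N : ℕ) : Set (ℤ × ℤ) :=
  {v | (|v.1| ≤ (N : ℤ) ∧ |v.2| ≤ (N : ℤ)) ∧ (|v.1| = (N : ℤ) ∨ |v.2| = (N : ℤ))}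

/-- `e ∈ E_N`: both endpoints of `e` lie in `V_N`. -/
def edgeInBox (N : ℕ) (e : LatticeEdge) : Prop := e.fst ∈ VN N ∧ e.snd ∈ VN N

/-- The graph on `(V_N, open edges of E_N)` (vertices outside `V_N` are isolated). -/
def openGraphN (N : ℕ) (ω : LatticeEdge → Bool) : SimpleGraph (ℤ × ℤ) :=
  graphOf {e | edgeInBox N e ∧ ω e = true}

/-- The finite-volume event defining `τ^{f,N}_p(x,y)`: there is an open cluster `A` of
`(V_N, open edges of E_N)` with `{x,y} ⊆ V_A` and `V_A ∩ ∂_v^int V_N = ∅`. -/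
def FiniteVolEvent (N : ℕ) (x y : ℤ × ℤ) (ω : LatticeEdge → Bool) : Prop :=
  ∃ C : (openGraphN N ω).ConnectedComponent,
    x ∈ C.supp ∧ y ∈ C.supp ∧ C.supp ∩ intBdry N = ∅

/-- The finite-volume finite connectivity `τ^{f,N}_p(x,y)`. -/
noncomputable def tauFN (P : Measure (LatticeEdge → Bool)) (N : ℕ) (x y : ℤ × ℤ) : ℝ :=
  (P {ω | FiniteVolEvent N x y ω}).toReal

/-- `λ = (1-p)/p`. -/
noncomputable def lam (p : ℝ) : ℝ := (1 - p) / p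

/-- The threshold `η̃(p_h, x₁, x₂)` from the paper. -/
noncomputable def etaTilde (ph : ℝ) (x1 x2 : ℤ) : ℝ :=
  ((betaX (x1, x2) : ℝ) * ph ^ (4 * (x1 + x2 + 2)) /
      ((4 ^ 3 * lam ph) ^ (x1 + x2 + 3) / (1 - 4 ^ 3 * lam ph) +
        (betaX (x1, x2) : ℝ) * (1 + 12 * lam ph) ^ (2 * (x1 + x2 + 2)))) ^
    (1 / (2 * ((x2 : ℝ) - (x1 : ℝ))))

/-!
A minimal contour `γ` around `0` and `x = (n, m)` is the edge boundary of its interior `I`.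
Since `I` is connected it meets every column `0, …, n` and every row `0, …, m`, and each column
or row it meets carries at least two boundary edges; so `|γ| = 2 (n + m + 2)` forces `I` to lie
in the box `[0, n] × [0, m]` and to be convex along rows and columns, i.e. `I` is a
parallelogram polyomino spanning the box, and conversely every such polyomino is the interior
of a minimal contour. Hence `β_{(n,m)}` counts these polyominoes. The bottom and top heights of
the columns are monotone, so the two bounding lattice paths encode a polyomino by a pair of
subsets of `[0, n + m]`, whence `β_{(n,m)} ≤ 4 ^ (n + m + 1)`; gluing two polyominoes at a
corner gives `β_{(n,m)} β_{(n',m')} ≤ β_{(n+n',m+m')}`. Fekete's lemma applied to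
`-log α_n` then yields the limit together with `1 ≤ α ≤ 4 ^ (1 + ρ)`.
-/

lemma Int.exists_mem_not_mem_add_one {P : ℤ → Prop} {a c : ℤ} (hac : a ≤ c) (ha : P a)
    (hc : ¬P c) : ∃ d, a ≤ d ∧ d < c ∧ P d ∧ ¬P (d + 1) := by
  by_contra! h
  have key : ∀ k : ℕ, a + k ≤ c → P (a + k) := by
    intro k
    induction k with
    | zero => exact fun _ => by simpa using ha
    | succ k ih =>
      intro hk
      have := h (a + k) (by omega) (by omega) (ih (by omega))
      rwa [Nat.cast_succ, ← add_assoc]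
  have := key (c - a).toNat (by omega)
  rw [show a + ((c - a).toNat : ℤ) = c by omega] at this
  exact hc this

lemma Set.OrdConnected.union {α : Type*} [LinearOrder α] {s t : Set α} (hs : s.OrdConnected)
    (ht : t.OrdConnected) (h : s.Nonempty → t.Nonempty → (s ∩ t).Nonempty) :
    (s ∪ t).OrdConnected := by
  have key : ∀ {s t : Set α}, s.OrdConnected → t.OrdConnected → ∀ c ∈ s, c ∈ t →
      ∀ x ∈ s, ∀ y ∈ t, Set.Icc x y ⊆ s ∪ t := fun hs ht c hcs hct x hx y hy z hz => by
    rcases le_total z c with hzc | hcz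
    · exact Or.inl (hs.out hx hcs ⟨hz.1, hzc⟩)
    · exact Or.inr (ht.out hct hy ⟨hcz, hz.2⟩)
  refine ⟨fun x hx y hy => ?_⟩
  rcases hx with hx | hx <;> rcases hy with hy | hy
  · exact (hs.out hx hy).trans Set.subset_union_left
  · obtain ⟨c, hcs, hct⟩ := h ⟨x, hx⟩ ⟨y, hy⟩
    exact key hs ht c hcs hct x hx y hy
  · obtain ⟨c, hcs, hct⟩ := h ⟨y, hy⟩ ⟨x, hx⟩
    exact (key ht hs c hct hcs x hx y hy).trans (Set.union_comm _ _).subset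
  · exact (ht.out hx hy).trans Set.subset_union_right

lemma Set.ncard_prod_univ_bool {α : Type*} (s : Set α) :
    (s ×ˢ (Set.univ : Set Bool)).ncard = 2 * s.ncard := by
  rw [Set.ncard_prod, Set.ncard_univ, Nat.card_eq_fintype_card, Fintype.card_bool, mul_comm]

/-- `i ↦ i + h i` is strictly increasing, hence determined by its image. -/
lemma eq_of_image_add_eq {k : ℕ} {h h' : Fin k → ℤ} (hh : Monotone h) (hh' : Monotone h')
    (himg : Finset.univ.image (fun i : Fin k => (i : ℤ) + h i) =
      Finset.univ.image (fun i : Fin k => (i : ℤ) + h' i)) : h = h' := by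
  have hval : StrictMono fun i : Fin k => ((i : ℕ) : ℤ) :=
    Nat.strictMono_cast.comp Fin.val_strictMono
  have := congrArg (fun s : Finset ℤ => (s : Set ℤ)) himg
  simp only [Finset.coe_image, Finset.coe_univ, Set.image_univ] at this
  funext i
  simpa using congrFun (((hval.add_monotone hh).range_inj (hval.add_monotone hh')).1 this) i

namespace SimpleGraph

variable {V : Type*} {G : SimpleGraph V}

lemma Reachable.mem_of_closed {S : Set V} (hcl : ∀ u w, G.Adj u w → u ∈ S → w ∈ S)
    {u v : V} (huv : G.Reachable u v) (hu : u ∈ S) : v ∈ S := by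
  obtain ⟨p⟩ := huv
  induction p with
  | nil => exact hu
  | cons h _ ih => exact ih (hcl _ _ h hu)

lemma supp_connectedComponentMk_eq {S : Set V} {v : V} (hv : v ∈ S)
    (hreach : ∀ u ∈ S, G.Reachable v u) (hcl : ∀ u w, G.Adj u w → u ∈ S → w ∈ S) :
    (G.connectedComponentMk v).supp = S := by
  ext u
  rw [ConnectedComponent.mem_supp_iff, ConnectedComponent.eq]
  exact ⟨fun h => h.symm.mem_of_closed hcl hv, fun h => (hreach u h).symm⟩

lemma reachable_of_forall_adj (f : ℤ → V) {r s : ℤ} (hrs : r ≤ s)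
    (h : ∀ k, r ≤ k → k < s → G.Adj (f k) (f (k + 1))) : G.Reachable (f r) (f s) := by
  induction s, hrs using Int.leInduction with
  | base => rfl
  | succ s hrs ih =>
    exact (ih fun k hk hks => h k hk (by omega)).trans (h s hrs (by omega)).reachable

lemma Walk.exists_mem_support_eq_of_le (f : V → ℤ) (hf : ∀ u v, G.Adj u v → f v ≤ f u + 1)
    {u v : V} (p : G.Walk u v) {a : ℤ} (hu : f u ≤ a) (hv : a ≤ f v) :
    ∃ w ∈ p.support, f w = a := by
  rcases hu.eq_or_lt with hua | hua
  · exact ⟨u, p.start_mem_support, hua⟩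
  obtain ⟨d, hd, hd₁, hd₂⟩ := p.exists_boundary_dart {w | f w < a} hua (by simpa using hv)
  have := hf _ _ d.adj
  exact ⟨d.snd, p.dart_snd_mem_support_of_mem_darts hd, by simp at hd₁ hd₂; omega⟩

/-- A walk leaves the quadrant `f ≤ a, g ≤ r` only across its right side `f = a` or its top
side `g = r`. -/
lemma Walk.exists_mem_support_of_quadrant (f g : V → ℤ)
    (hstep : ∀ u v, G.Adj u v →
      f v ≤ f u + 1 ∧ g v ≤ g u + 1 ∧ (f v = f u ∨ g v = g u))
    {u v : V} (p : G.Walk u v) {a r : ℤ} (hu : f u ≤ a ∧ g u ≤ r) (hv : a < f v) :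
    ∃ w ∈ p.support, (f w = a ∧ g w < r) ∨ (f w ≤ a ∧ g w = r) := by
  rcases hu.2.eq_or_lt with hur | hur
  · exact ⟨u, p.start_mem_support, Or.inr ⟨hu.1, hur⟩⟩
  obtain ⟨d, hd, hd₁, hd₂⟩ :=
    p.exists_boundary_dart {w | f w ≤ a ∧ g w < r} ⟨hu.1, hur⟩ (by simp; omega)
  simp only [Set.mem_ofPred_eq, not_and_or, not_le, not_lt] at hd₁ hd₂
  have := hstep _ _ d.adj
  rcases hd₂ with hd₂ | hd₂
  · exact ⟨d.fst, p.dart_fst_mem_support_of_mem_darts hd, Or.inl (by omega)⟩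
  · exact ⟨d.snd, p.dart_snd_mem_support_of_mem_darts hd, Or.inr (by omega)⟩

end SimpleGraph

section Fekete

open Real

variable {a : ℕ → ℝ}

lemma subadditive_neg_log (hpos : ∀ k, 0 < a k) (hmul : ∀ k l, a k * a l ≤ a (k + l)) :
    Subadditive fun k => -log (a k) := fun k l => by
  have := log_le_log (mul_pos (hpos k) (hpos l)) (hmul k l)
  rw [log_mul (hpos k).ne' (hpos l).ne'] at this
  linarith

lemma sub_log_le_neg_log_div (hpos : ∀ k, 0 < a k) {C D : ℝ} (hC : 0 < C) (hD : 0 < D)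
    (hbound : ∀ k, a k ≤ C * D ^ k) {k : ℕ} (hk : k ≠ 0) :
    -log C / k - log D ≤ -log (a k) / k := by
  have hk' : (0 : ℝ) < k := by positivity
  have := log_le_log (hpos k) (hbound k)
  rw [log_mul hC.ne' (by positivity), log_pow] at this
  rw [sub_le_iff_le_add, div_add' _ _ _ hk'.ne', div_le_div_iff_of_pos_right hk']
  linarith

/-- Fekete's lemma, in multiplicative form. -/
theorem exists_tendsto_rpow_one_div_of_supermultiplicative (h1 : ∀ k, 1 ≤ a k)
    (hmul : ∀ k l, a k * a l ≤ a (k + l)) {C D : ℝ} (hbound : ∀ k, a k ≤ C * D ^ k) :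
    ∃ α, 1 ≤ α ∧ α ≤ D ∧
      Tendsto (fun k : ℕ => a k ^ (1 / (k : ℝ))) atTop (nhds α) := by
  have hpos k : 0 < a k := zero_lt_one.trans_le (h1 k)
  have hC : 1 ≤ C := by simpa using (h1 0).trans (hbound 0)
  have hD : 0 < D := by
    have := (h1 1).trans (hbound 1)
    rw [pow_one] at this
    by_contra! h
    nlinarith
  have hsub := subadditive_neg_log hpos hmul
  have hlow := fun k => sub_log_le_neg_log_div hpos (by linarith) hD hbound (k := k)
  have hbdd : BddBelow (Set.range fun k => -log (a k) / k) := by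
    refine ⟨-log C - |log D|, ?_⟩
    rintro _ ⟨k, rfl⟩
    have hlogC : 0 ≤ log C := log_nonneg hC
    rcases eq_or_ne k 0 with rfl | hk
    · simp only [Nat.cast_zero, div_zero]
      linarith [abs_nonneg (log D)]
    · have : -log C ≤ -log C / k := by
        rw [le_div_iff₀ (by positivity)]
        nlinarith [(Nat.one_le_cast (α := ℝ)).2 (Nat.one_le_iff_ne_zero.2 hk)]
      linarith [hlow k hk, le_abs_self (log D)]
  have htend := hsub.tendsto_lim hbdd
  refine ⟨exp (-hsub.lim), ?_, ?_, ?_⟩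
  · have := hsub.lim_le_div hbdd one_ne_zero
    simp only [Nat.cast_one, div_one] at this
    exact one_le_exp (by linarith [log_nonneg (h1 1)])
  · have hlim : -log D ≤ hsub.lim := by
      refine le_of_tendsto_of_tendsto ?_ htend
        ((eventually_ne_atTop 0).mono fun k hk => hlow k hk)
      simpa using (tendsto_const_div_atTop_nhds_zero_nat (-log C)).sub_const (log D)
    calc exp (-hsub.lim) ≤ exp (log D) := exp_le_exp.2 (by linarith)
      _ = D := exp_log hD
  · refine ((continuous_exp.tendsto _).comp htend.neg).congr fun k => ?_
    simp only [Function.comp_apply, rpow_def_of_pos (hpos k)]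
    congr 1
    ring

end Fekete

lemma LatticeEdge.fst_ne_snd (e : LatticeEdge) : e.fst ≠ e.snd := by
  obtain ⟨⟨a, r⟩, _ | _⟩ := e <;> simp [LatticeEdge.fst, LatticeEdge.snd]

def LatticeEdge.transpose (e : LatticeEdge) : LatticeEdge := ⟨e.base.swap, !e.horiz⟩

lemma LatticeEdge.transpose_fst (e : LatticeEdge) : e.transpose.fst = e.fst.swap := rfl

lemma LatticeEdge.transpose_snd (e : LatticeEdge) : e.transpose.snd = e.snd.swap := by
  obtain ⟨⟨a, r⟩, _ | _⟩ := e <;> rfl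

lemma LatticeEdge.transpose_involutive : Function.Involutive LatticeEdge.transpose := fun e => by
  simp [LatticeEdge.transpose]

namespace MinimalContour

open SimpleGraph

/-! ### The square lattice -/

def hEdge (a r : ℤ) : LatticeEdge := ⟨(a, r), true⟩

def vEdge (a r : ℤ) : LatticeEdge := ⟨(a, r), false⟩

@[simp] lemma hEdge_fst (a r : ℤ) : (hEdge a r).fst = (a, r) := rfl
@[simp] lemma hEdge_snd (a r : ℤ) : (hEdge a r).snd = (a + 1, r) := rfl
@[simp] lemma vEdge_fst (a r : ℤ) : (vEdge a r).fst = (a, r) := rfl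
@[simp] lemma vEdge_snd (a r : ℤ) : (vEdge a r).snd = (a, r + 1) := rfl

lemma graphOf_adj_iff {E : Set LatticeEdge} {u v : ℤ × ℤ} :
    (graphOf E).Adj u v ↔ ∃ e ∈ E, e.ends = s(u, v) := by
  refine ⟨fun h => h.2, fun ⟨e, he, hends⟩ => ⟨?_, e, he, hends⟩⟩
  rintro rfl
  rw [LatticeEdge.ends, Sym2.eq_iff] at hends
  exact e.fst_ne_snd (by rcases hends with ⟨h₁, h₂⟩ | ⟨h₁, h₂⟩ <;> rw [h₁, h₂])

def latticeGraph : SimpleGraph (ℤ × ℤ) := graphOf Set.univ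

lemma graphOf_setOf_adj_iff {P : ℤ × ℤ → ℤ × ℤ → Prop} (hP : ∀ u v, P u v → P v u)
    {u v : ℤ × ℤ} :
    (graphOf {e | P e.fst e.snd}).Adj u v ↔ latticeGraph.Adj u v ∧ P u v := by
  simp only [latticeGraph, graphOf_adj_iff, Set.mem_ofPred_eq, Set.mem_univ, true_and,
    LatticeEdge.ends, Sym2.eq_iff]
  constructor
  · rintro ⟨e, hP', hends⟩
    refine ⟨⟨e, hends⟩, ?_⟩
    rcases hends with ⟨rfl, rfl⟩ | ⟨rfl, rfl⟩
    exacts [hP', hP _ _ hP']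
  · rintro ⟨⟨e, hends⟩, huv⟩
    refine ⟨e, ?_, hends⟩
    rcases hends with ⟨rfl, rfl⟩ | ⟨rfl, rfl⟩
    exacts [huv, hP _ _ huv]

lemma latticeGraph_adj_iff {u v : ℤ × ℤ} :
    latticeGraph.Adj u v ↔
      (u.1 = v.1 ∧ (v.2 = u.2 + 1 ∨ u.2 = v.2 + 1)) ∨
        (u.2 = v.2 ∧ (v.1 = u.1 + 1 ∨ u.1 = v.1 + 1)) := by
  obtain ⟨a, r⟩ := u
  obtain ⟨c, y⟩ := v
  simp only [latticeGraph, graphOf_adj_iff, Set.mem_univ, true_and, LatticeEdge.ends,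
    Sym2.eq_iff]
  constructor
  · rintro ⟨⟨⟨p, q⟩, _ | _⟩, h⟩ <;>
      simp [LatticeEdge.fst, LatticeEdge.snd] at h <;> omega
  · rintro (⟨rfl, rfl | rfl⟩ | ⟨rfl, rfl | rfl⟩)
    exacts [⟨vEdge a r, by simp⟩, ⟨vEdge a y, by simp⟩, ⟨hEdge a r, by simp⟩,
      ⟨hEdge c r, by simp⟩]

lemma coord_steps_of_adj {u v : ℤ × ℤ} (h : latticeGraph.Adj u v) :
    (v.1 ≤ u.1 + 1 ∧ v.2 ≤ u.2 + 1 ∧ (v.1 = u.1 ∨ v.2 = u.2)) ∧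
      (-v.1 ≤ -u.1 + 1 ∧ -v.2 ≤ -u.2 + 1 ∧ (-v.1 = -u.1 ∨ -v.2 = -u.2)) := by
  rw [latticeGraph_adj_iff] at h
  omega

/-- The lattice graph induced on `S`, with the other vertices isolated. -/
def latticeGraphOn (S : Set (ℤ × ℤ)) : SimpleGraph (ℤ × ℤ) :=
  graphOf {e | e.fst ∈ S ∧ e.snd ∈ S}

lemma latticeGraphOn_adj_iff {S : Set (ℤ × ℤ)} {u v : ℤ × ℤ} :
    (latticeGraphOn S).Adj u v ↔ latticeGraph.Adj u v ∧ u ∈ S ∧ v ∈ S :=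
  graphOf_setOf_adj_iff (P := fun u v => u ∈ S ∧ v ∈ S) fun _ _ h => h.symm

lemma latticeGraphOn_mono {S T : Set (ℤ × ℤ)} (h : S ⊆ T) :
    latticeGraphOn S ≤ latticeGraphOn T :=
  fun _ _ huv => latticeGraphOn_adj_iff.2 <| by
    obtain ⟨hadj, hu, hv⟩ := latticeGraphOn_adj_iff.1 huv
    exact ⟨hadj, h hu, h hv⟩

lemma latticeGraphOn_le (S : Set (ℤ × ℤ)) : latticeGraphOn S ≤ latticeGraph :=
  fun _ _ h => (latticeGraphOn_adj_iff.1 h).1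

lemma mem_of_mem_support {S : Set (ℤ × ℤ)} {u v : ℤ × ℤ} (p : (latticeGraphOn S).Walk u v)
    (hu : u ∈ S) {w : ℤ × ℤ} (hw : w ∈ p.support) : w ∈ S := by
  induction p with
  | nil => rwa [Walk.mem_support_nil_iff.1 hw]
  | cons h _ ih =>
    rcases List.mem_cons.1 (Walk.support_cons _ _ ▸ hw) with rfl | hw
    exacts [hu, ih (latticeGraphOn_adj_iff.1 h).2.2 hw]

lemma Icc_subset_image_of_reachable {S : Set (ℤ × ℤ)} (f : ℤ × ℤ → ℤ)
    (hf : ∀ u v, latticeGraph.Adj u v → f v ≤ f u + 1) {u v : ℤ × ℤ} (hu : u ∈ S)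
    (huv : (latticeGraphOn S).Reachable u v) : Set.Icc (f u) (f v) ⊆ f '' S := by
  obtain ⟨p⟩ := huv
  rintro a ⟨ha₁, ha₂⟩
  obtain ⟨w, hw, rfl⟩ := p.exists_mem_support_eq_of_le f
    (fun u v h => hf u v (latticeGraphOn_le S h)) ha₁ ha₂
  exact ⟨w, mem_of_mem_support p hu hw, rfl⟩

lemma reachable_of_col {T : Set (ℤ × ℤ)} {a r s : ℤ} (hrs : r ≤ s)
    (h : ∀ y, r ≤ y → y ≤ s → (a, y) ∈ T) :
    (latticeGraphOn T).Reachable (a, r) (a, s) :=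
  reachable_of_forall_adj (fun y => (a, y)) hrs fun k hk hks => latticeGraphOn_adj_iff.2
    ⟨latticeGraph_adj_iff.2 (by simp), h k hk hks.le, h (k + 1) (by omega) hks⟩

lemma reachable_of_row {T : Set (ℤ × ℤ)} {r a c : ℤ} (hac : a ≤ c)
    (h : ∀ x, a ≤ x → x ≤ c → (x, r) ∈ T) :
    (latticeGraphOn T).Reachable (a, r) (c, r) :=
  reachable_of_forall_adj (fun x => (x, r)) hac fun k hk hkc => latticeGraphOn_adj_iff.2
    ⟨latticeGraph_adj_iff.2 (by simp), h k hk hkc.le, h (k + 1) (by omega) hkc⟩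

lemma reachable_add {T T' : Set (ℤ × ℤ)} (c : ℤ × ℤ) (hT : ∀ p ∈ T, p + c ∈ T')
    {u v : ℤ × ℤ} (h : (latticeGraphOn T).Reachable u v) :
    (latticeGraphOn T').Reachable (u + c) (v + c) := by
  refine h.map ⟨(· + c), fun {p q} hpq => ?_⟩
  obtain ⟨hadj, hp, hq⟩ := latticeGraphOn_adj_iff.1 hpq
  refine latticeGraphOn_adj_iff.2 ⟨?_, hT p hp, hT q hq⟩
  rw [latticeGraph_adj_iff] at hadj ⊢
  simp only [Prod.fst_add, Prod.snd_add]
  omega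

/-! ### Contours as edge boundaries -/

def edgeBoundary (S : Set (ℤ × ℤ)) : Set LatticeEdge := {e | Xor (e.fst ∈ S) (e.snd ∈ S)}

lemma edgeBoundary_finite {S : Set (ℤ × ℤ)} (hS : S.Finite) : (edgeBoundary S).Finite := by
  have hT : (S ∪ (· - (1, 0)) '' S ∪ (· - (0, 1)) '' S).Finite :=
    (hS.union (hS.image _)).union (hS.image _)
  refine ((hT.prod Set.finite_univ).preimage
    (f := fun e : LatticeEdge => (e.base, e.horiz)) ?_).subset ?_
  · rintro ⟨⟩ - ⟨⟩ - h
    simp_all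
  · rintro ⟨⟨a, r⟩, _ | _⟩ (⟨h, -⟩ | ⟨h, -⟩) <;>
      simp_all [LatticeEdge.fst, LatticeEdge.snd]
    exacts [Or.inr ⟨_, h, by simp⟩, Or.inl (Or.inr ⟨_, h, by simp⟩)]

lemma mem_iff_mem_of_not_mem_edgeBoundary {S : Set (ℤ × ℤ)} {e : LatticeEdge}
    {u w : ℤ × ℤ} (hends : e.ends = s(u, w)) (he : e ∉ edgeBoundary S) :
    u ∈ S ↔ w ∈ S := by
  rw [LatticeEdge.ends, Sym2.eq_iff] at hends
  have he' : e.fst ∈ S ↔ e.snd ∈ S := (not_xor _ _).1 he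
  rcases hends with ⟨rfl, rfl⟩ | ⟨rfl, rfl⟩
  exacts [he', he'.symm]

section Boundary

variable {γ : Finset LatticeEdge} {S : Set (ℤ × ℤ)}

lemma complGraph_adj_iff (hγ : (γ : Set LatticeEdge) = edgeBoundary S) {u v : ℤ × ℤ} :
    (complGraph γ).Adj u v ↔ latticeGraph.Adj u v ∧ (u ∈ S ↔ v ∈ S) := by
  have : {e | e ∉ γ} = {e : LatticeEdge | e.fst ∈ S ↔ e.snd ∈ S} := by
    ext e
    simp only [Set.mem_ofPred_eq, ← Finset.mem_coe, hγ, edgeBoundary, not_xor]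
  rw [complGraph, this]
  exact graphOf_setOf_adj_iff (P := fun u v => u ∈ S ↔ v ∈ S) fun _ _ h => h.symm

lemma latticeGraphOn_le_complGraph (hγ : (γ : Set LatticeEdge) = edgeBoundary S) :
    latticeGraphOn S ≤ complGraph γ := fun _ _ huv => by
  obtain ⟨hadj, hu, hv⟩ := latticeGraphOn_adj_iff.1 huv
  exact (complGraph_adj_iff hγ).2 ⟨hadj, iff_of_true hu hv⟩

lemma latticeGraphOn_compl_le_complGraph (hγ : (γ : Set LatticeEdge) = edgeBoundary S) :
    latticeGraphOn Sᶜ ≤ complGraph γ := fun _ _ huv => by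
  obtain ⟨hadj, hu, hv⟩ := latticeGraphOn_adj_iff.1 huv
  exact (complGraph_adj_iff hγ).2 ⟨hadj, iff_of_false hu hv⟩

lemma reachable_latticeGraphOn_of_reachable (hγ : (γ : Set LatticeEdge) = edgeBoundary S)
    {u v : ℤ × ℤ} (hu : u ∈ S) (huv : (complGraph γ).Reachable u v) :
    (latticeGraphOn S).Reachable u v := by
  obtain ⟨p⟩ := huv
  induction p with
  | nil => rfl
  | cons h _ ih =>
    obtain ⟨hadj, hmem⟩ := (complGraph_adj_iff hγ).1 h
    exact (latticeGraphOn_adj_iff.2 ⟨hadj, hu, hmem.1 hu⟩).reachable.trans (ih (hmem.1 hu))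

end Boundary

lemma complGraph_le_graphOf_restore (γ : Finset LatticeEdge) (e : LatticeEdge) :
    complGraph γ ≤ graphOf {f | f ∉ γ ∨ f = e} :=
  fun _ _ ⟨hne, f, hf, hends⟩ => ⟨hne, f, Or.inl hf, hends⟩

theorem coe_eq_edgeBoundary_supp {γ : Finset LatticeEdge} (hγ : IsContour γ)
    {C : (complGraph γ).ConnectedComponent} (hC : C.supp.Finite) :
    (γ : Set LatticeEdge) = edgeBoundary C.supp := by
  ext e
  constructor
  · intro he
    by_contra hnb
    -- putting `e` back does not enlarge `C`, contradicting the minimality of `γ`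
    obtain ⟨v, hv⟩ := C.exists_rep
    refine hγ.2 e he (connectedComponentMk _ v) ?_
    rwa [supp_connectedComponentMk_eq (S := C.supp) hv]
    · exact fun u hu => (ConnectedComponent.exact (hv.trans hu.symm)).mono
        (complGraph_le_graphOf_restore γ e)
    · rintro u w ⟨-, f, hf | rfl, hends⟩ hu
      · exact (C.mem_supp_congr_adj (graphOf_adj_iff.2 ⟨f, hf, hends⟩)).1 hu
      · exact (mem_iff_mem_of_not_mem_edgeBoundary hends hnb).1 hu
  · intro he
    by_contra hne
    exact (xor_iff_not_iff _ _).1 he (C.mem_supp_congr_adj ⟨e.fst_ne_snd, e, hne, rfl⟩)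

theorem isContour_of_coe_eq_edgeBoundary {γ : Finset LatticeEdge} {S : Set (ℤ × ℤ)}
    (hγ : (γ : Set LatticeEdge) = edgeBoundary S) (hS : S.Finite) {v : ℤ × ℤ} (hv : v ∈ S)
    (hin : ∀ u ∈ S, (complGraph γ).Reachable v u)
    (hout : ∀ u ∉ S, ∀ w ∉ S, (complGraph γ).Reachable u w) :
    IsContour γ ∧ ((complGraph γ).connectedComponentMk v).supp = S := by
  have hsupp := supp_connectedComponentMk_eq hv hin
    fun u w h => ((complGraph_adj_iff hγ).1 h).2.1
  refine ⟨⟨⟨_, hsupp ▸ hS, fun C hC => ?_⟩, fun e he C => ?_⟩, hsupp⟩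
  · obtain ⟨w, rfl⟩ := C.exists_rep
    by_cases hw : w ∈ S
    · exact ConnectedComponent.sound (hin w hw).symm
    · refine absurd (hS.infinite_compl.mono fun u hu => ?_) (Set.not_infinite.2 hC)
      exact ConnectedComponent.sound (hout u hu w hw)
  · -- putting back a boundary edge joins the inside to the (infinite) outside
    have hle := complGraph_le_graphOf_restore γ e
    have hadj : (graphOf {f | f ∉ γ ∨ f = e}).Adj e.fst e.snd :=
      ⟨e.fst_ne_snd, e, Or.inr rfl, rfl⟩
    have hbd : Xor (e.fst ∈ S) (e.snd ∈ S) := by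
      rw [← Finset.mem_coe, hγ] at he
      exact he
    have hall : ∀ u, (graphOf {f | f ∉ γ ∨ f = e}).Reachable v u := by
      intro u
      by_cases hu : u ∈ S
      · exact (hin u hu).mono hle
      rcases hbd with ⟨h₁, h₂⟩ | ⟨h₁, h₂⟩
      · exact ((hin _ h₁).mono hle).trans (hadj.reachable.trans ((hout _ h₂ u hu).mono hle))
      · exact ((hin _ h₁).mono hle).trans
          (hadj.symm.reachable.trans ((hout _ h₂ u hu).mono hle))
    obtain ⟨w, hw⟩ := C.exists_rep
    exact Set.infinite_univ.mono fun u _ =>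
      (ConnectedComponent.sound ((hall u).symm.trans (hall w))).trans hw

/-! ### Counting boundary edges -/

section Counting

variable {S : Set (ℤ × ℤ)} {γ : Finset LatticeEdge}

noncomputable def colMin (S : Set (ℤ × ℤ)) (a : ℤ) : ℤ := sInf {y | (a, y) ∈ S}

noncomputable def colMax (S : Set (ℤ × ℤ)) (a : ℤ) : ℤ := sSup {y | (a, y) ∈ S}

lemma finite_col (hS : S.Finite) (a : ℤ) : {y | (a, y) ∈ S}.Finite :=
  hS.preimage (Prod.mk_right_injective a).injOn

lemma colMin_le (hS : S.Finite) {a y : ℤ} (h : (a, y) ∈ S) : colMin S a ≤ y :=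
  csInf_le (finite_col hS a).bddBelow h

lemma le_colMax (hS : S.Finite) {a y : ℤ} (h : (a, y) ∈ S) : y ≤ colMax S a :=
  le_csSup (finite_col hS a).bddAbove h

lemma mk_colMin_mem (hS : S.Finite) {a y : ℤ} (h : (a, y) ∈ S) : (a, colMin S a) ∈ S :=
  Set.Nonempty.csInf_mem ⟨y, h⟩ (finite_col hS a)

lemma mk_colMax_mem (hS : S.Finite) {a y : ℤ} (h : (a, y) ∈ S) : (a, colMax S a) ∈ S :=
  Set.Nonempty.csSup_mem ⟨y, h⟩ (finite_col hS a)

/-- The bottom (`false`) and top (`true`) boundary edge of a column of `S`. -/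
noncomputable def colEndEdge (S : Set (ℤ × ℤ)) (q : ℤ × Bool) : LatticeEdge :=
  vEdge q.1 (if q.2 then colMax S q.1 else colMin S q.1 - 1)

lemma colEndEdge_mem (hS : S.Finite) (hγ : (γ : Set LatticeEdge) = edgeBoundary S)
    {q : ℤ × Bool} (hq : q.1 ∈ Prod.fst '' S) :
    colEndEdge S q ∈ γ.filter (·.horiz = false) := by
  obtain ⟨a, b⟩ := q
  obtain ⟨⟨_, y⟩, hy, rfl⟩ := hq
  refine Finset.mem_filter.2 ⟨?_, rfl⟩
  rw [← Finset.mem_coe, hγ]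
  cases b <;> simp only [colEndEdge, Bool.false_eq_true, if_false, if_true, edgeBoundary,
    Set.mem_ofPred_eq, vEdge_fst, vEdge_snd, sub_add_cancel]
  · refine Or.inr ⟨mk_colMin_mem hS hy, fun h => ?_⟩
    have := colMin_le hS h
    omega
  · refine Or.inl ⟨mk_colMax_mem hS hy, fun h => ?_⟩
    have := le_colMax hS h
    omega

lemma colEndEdge_injOn (hS : S.Finite) :
    Set.InjOn (colEndEdge S) ((Prod.fst '' S) ×ˢ Set.univ) := by
  rintro ⟨a, b⟩ ⟨⟨⟨_, y⟩, hy, rfl⟩, -⟩ ⟨a', b'⟩ - h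
  simp only [colEndEdge, vEdge, LatticeEdge.mk.injEq, Prod.mk.injEq, and_true] at h
  obtain ⟨rfl, h⟩ := h
  have := (colMin_le hS hy).trans (le_colMax hS hy)
  cases b <;> cases b' <;> simp at h ⊢ <;> omega

lemma colEndEdge_image_subset (hS : S.Finite) (hγ : (γ : Set LatticeEdge) = edgeBoundary S) :
    colEndEdge S '' ((Prod.fst '' S) ×ˢ Set.univ) ⊆ γ.filter (·.horiz = false) :=
  Set.image_subset_iff.2 fun _ hq => colEndEdge_mem hS hγ hq.1

lemma ncard_colEndEdge_image (hS : S.Finite) :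
    (colEndEdge S '' ((Prod.fst '' S) ×ˢ Set.univ)).ncard = 2 * (Prod.fst '' S).ncard := by
  rw [(colEndEdge_injOn hS).ncard_image, Set.ncard_prod_univ_bool _]

theorem two_mul_ncard_image_fst_le_vCount (hS : S.Finite)
    (hγ : (γ : Set LatticeEdge) = edgeBoundary S) : 2 * (Prod.fst '' S).ncard ≤ vCount γ := by
  rw [vCount, ← Set.ncard_coe_finset, ← ncard_colEndEdge_image hS]
  exact Set.ncard_le_ncard (colEndEdge_image_subset hS hγ)

/-- A gap in a column creates a further vertical boundary edge. -/
lemma ordConnected_col_of_vCount_le (hS : S.Finite)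
    (hγ : (γ : Set LatticeEdge) = edgeBoundary S) (hle : vCount γ ≤ 2 * (Prod.fst '' S).ncard)
    (a : ℤ) : {y | (a, y) ∈ S}.OrdConnected := by
  rw [vCount, ← Set.ncard_coe_finset, ← ncard_colEndEdge_image hS] at hle
  have heq := Set.eq_of_subset_of_ncard_le (colEndEdge_image_subset hS hγ) hle
    (Finset.finite_toSet _)
  refine ⟨fun y₁ h₁ y₂ h₂ y ⟨hy₁, hy₂⟩ => by_contra fun hy' => ?_⟩
  obtain ⟨d, hd₁, hd₂, hd, hd'⟩ :=
    Int.exists_mem_not_mem_add_one (P := fun c => (a, c) ∈ S) hy₁ h₁ hy'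
  have hmem : vEdge a d ∈ (γ.filter (·.horiz = false) : Set LatticeEdge) := by
    rw [Finset.coe_filter, Set.mem_ofPred_eq, ← Finset.mem_coe, hγ]
    exact ⟨Or.inl ⟨hd, hd'⟩, rfl⟩
  rw [← heq] at hmem
  obtain ⟨⟨a', b⟩, -, h⟩ := hmem
  simp only [colEndEdge, vEdge, LatticeEdge.mk.injEq, Prod.mk.injEq, and_true] at h
  obtain ⟨rfl, h⟩ := h
  have := colMin_le hS h₁
  have := le_colMax hS h₂
  cases b <;> simp at h <;> omega

lemma vCount_le_of_ordConnected_col (hS : S.Finite)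
    (hγ : (γ : Set LatticeEdge) = edgeBoundary S)
    (hconv : ∀ a, {y | (a, y) ∈ S}.OrdConnected) : vCount γ ≤ 2 * (Prod.fst '' S).ncard := by
  rw [vCount, ← Set.ncard_coe_finset, ← ncard_colEndEdge_image hS]
  refine Set.ncard_le_ncard (fun e he => ?_) (((hS.image _).prod Set.finite_univ).image _)
  rw [Finset.coe_filter, Set.mem_ofPred_eq, ← Finset.mem_coe, hγ] at he
  obtain ⟨hbd, hv⟩ := he
  obtain ⟨⟨a, r⟩, h⟩ := e
  obtain rfl : h = false := hv
  change Xor ((a, r) ∈ S) ((a, r + 1) ∈ S) at hbd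
  rcases hbd with ⟨h₁, h₂⟩ | ⟨h₂, h₁⟩
  · refine ⟨(a, true), ⟨⟨_, h₁, rfl⟩, trivial⟩, ?_⟩
    have hle := le_colMax hS h₁
    have : ¬r < colMax S a := fun hlt =>
      h₂ ((hconv a).out h₁ (mk_colMax_mem hS h₁) ⟨by omega, by omega⟩)
    simp only [colEndEdge, vEdge, if_true, LatticeEdge.mk.injEq, Prod.mk.injEq, and_true,
      true_and]
    omega
  · refine ⟨(a, false), ⟨⟨_, h₂, rfl⟩, trivial⟩, ?_⟩
    have hle := colMin_le hS h₂
    have : ¬colMin S a < r + 1 := fun hlt =>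
      h₁ ((hconv a).out (mk_colMin_mem hS h₂) h₂ ⟨by omega, by omega⟩)
    simp only [colEndEdge, vEdge, Bool.false_eq_true, if_false, LatticeEdge.mk.injEq,
      Prod.mk.injEq, and_true, true_and]
    omega

theorem vCount_le_two_mul_ncard_iff (hS : S.Finite)
    (hγ : (γ : Set LatticeEdge) = edgeBoundary S) :
    vCount γ ≤ 2 * (Prod.fst '' S).ncard ↔ ∀ a, {y | (a, y) ∈ S}.OrdConnected :=
  ⟨ordConnected_col_of_vCount_le hS hγ, vCount_le_of_ordConnected_col hS hγ⟩

lemma coe_image_transpose (hγ : (γ : Set LatticeEdge) = edgeBoundary S) :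
    ((γ.image LatticeEdge.transpose : Finset LatticeEdge) : Set LatticeEdge) =
      edgeBoundary (Prod.swap ⁻¹' S) := by
  ext e
  rw [Finset.coe_image, LatticeEdge.transpose_involutive.image_eq_preimage_symm,
    Set.mem_preimage, hγ]
  simp only [edgeBoundary, Set.mem_ofPred_eq, Set.mem_preimage, LatticeEdge.transpose_fst,
    LatticeEdge.transpose_snd]

lemma vCount_image_transpose (γ : Finset LatticeEdge) :
    vCount (γ.image LatticeEdge.transpose) = hCount γ := by
  rw [vCount, hCount, Finset.filter_image,
    Finset.card_image_of_injective _ LatticeEdge.transpose_involutive.injective]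
  congr 1
  exact Finset.filter_congr fun e _ => by simp [LatticeEdge.transpose]

lemma image_fst_preimage_swap : Prod.fst '' (Prod.swap ⁻¹' S) = Prod.snd '' S := by
  rw [← Set.image_swap_eq_preimage_swap, Set.image_image]
  rfl

theorem two_mul_ncard_image_snd_le_hCount (hS : S.Finite)
    (hγ : (γ : Set LatticeEdge) = edgeBoundary S) : 2 * (Prod.snd '' S).ncard ≤ hCount γ := by
  simpa only [image_fst_preimage_swap, vCount_image_transpose] using
    two_mul_ncard_image_fst_le_vCount (hS.preimage Prod.swap_injective.injOn)
      (coe_image_transpose hγ)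

theorem hCount_le_two_mul_ncard_iff (hS : S.Finite)
    (hγ : (γ : Set LatticeEdge) = edgeBoundary S) :
    hCount γ ≤ 2 * (Prod.snd '' S).ncard ↔ ∀ r, {x | (x, r) ∈ S}.OrdConnected := by
  have := vCount_le_two_mul_ncard_iff (hS.preimage Prod.swap_injective.injOn)
    (coe_image_transpose hγ)
  rwa [image_fst_preimage_swap, vCount_image_transpose] at this

lemma hCount_add_vCount (γ : Finset LatticeEdge) : hCount γ + vCount γ = γ.card := by
  rw [hCount, vCount, ← Finset.card_filter_add_card_filter_not (s := γ) (·.horiz = true)]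
  simp

theorem two_mul_ncard_add_le_card (hS : S.Finite)
    (hγ : (γ : Set LatticeEdge) = edgeBoundary S) :
    2 * (Prod.fst '' S).ncard + 2 * (Prod.snd '' S).ncard ≤ γ.card := by
  have := two_mul_ncard_image_fst_le_vCount hS hγ
  have := two_mul_ncard_image_snd_le_hCount hS hγ
  have := hCount_add_vCount γ
  omega

theorem card_le_two_mul_ncard_add_iff (hS : S.Finite)
    (hγ : (γ : Set LatticeEdge) = edgeBoundary S) :
    γ.card ≤ 2 * (Prod.fst '' S).ncard + 2 * (Prod.snd '' S).ncard ↔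
      (∀ a, {y | (a, y) ∈ S}.OrdConnected) ∧ ∀ r, {x | (x, r) ∈ S}.OrdConnected := by
  rw [← vCount_le_two_mul_ncard_iff hS hγ, ← hCount_le_two_mul_ncard_iff hS hγ]
  have := two_mul_ncard_image_fst_le_vCount hS hγ
  have := two_mul_ncard_image_snd_le_hCount hS hγ
  have := hCount_add_vCount γ
  omega

end Counting

/-! ### Staircases -/

def box (n m : ℕ) : Set (ℤ × ℤ) := Set.Icc 0 ((n : ℤ), (m : ℤ))

lemma mem_box {n m : ℕ} {p : ℤ × ℤ} :
    p ∈ box n m ↔ 0 ≤ p.1 ∧ p.1 ≤ n ∧ 0 ≤ p.2 ∧ p.2 ≤ m := by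
  simp only [box, Set.mem_Icc, Prod.le_def, Prod.fst_zero, Prod.snd_zero]
  tauto

lemma ncard_Icc_natCast (n : ℕ) : (Set.Icc (0 : ℤ) n).ncard = n + 1 := by
  rw [← Finset.coe_Icc, Set.ncard_coe_finset, Int.card_Icc]
  omega

/-- Leave the box vertically, then go around it. -/
theorem reachable_neg_one_of_not_mem {n m : ℕ} {S : Set (ℤ × ℤ)} (hbox : S ⊆ box n m)
    (hcol : ∀ a, {y | (a, y) ∈ S}.OrdConnected) {u : ℤ × ℤ} (hu : u ∉ S) :
    (latticeGraphOn Sᶜ).Reachable u (-1, -1) := by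
  have hout : ∀ p : ℤ × ℤ, (p.1 < 0 ∨ n < p.1 ∨ p.2 < 0 ∨ m < p.2) → p ∉ S :=
    fun p hp hpS => by have := mem_box.1 (hbox hpS); omega
  have hbottom : ∀ a, (latticeGraphOn Sᶜ).Reachable (a, -1) (-1, -1) := by
    intro a
    rcases le_total a (-1) with ha | ha
    · exact reachable_of_row ha fun x _ _ => hout _ (by simp)
    · exact (reachable_of_row ha fun x _ _ => hout _ (by simp)).symm
  have htop : ∀ a, (latticeGraphOn Sᶜ).Reachable (a, m + 1) (-1, -1) := by
    intro a
    have hside : (latticeGraphOn Sᶜ).Reachable (-1, -1) (-1, m + 1) :=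
      reachable_of_col (by omega) fun y _ _ => hout _ (by simp)
    rcases le_total a (-1) with ha | ha
    · exact (reachable_of_row ha fun x _ _ => hout _ (by simp)).trans hside.symm
    · exact (reachable_of_row ha fun x _ _ => hout _ (by simp)).symm.trans hside.symm
  obtain ⟨a, r⟩ := u
  by_cases hbelow : ∀ y ≤ r, (a, y) ∉ S
  · rcases le_total r (-1) with hr | hr
    · exact (reachable_of_col hr fun y _ _ => hout _ (by simp; omega)).trans (hbottom a)
    · exact (reachable_of_col hr fun y _ hy => hbelow y hy).symm.trans (hbottom a)
  · obtain ⟨y₁, hy₁, hy₁S⟩ : ∃ y ≤ r, (a, y) ∈ S := by simpa using hbelow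
    have habove : ∀ y ≥ r, (a, y) ∉ S :=
      fun y hy hyS => hu ((hcol a).out hy₁S hyS ⟨hy₁, hy⟩)
    rcases le_total r (m + 1) with hr | hr
    · exact (reachable_of_col hr fun y hy _ => habove y hy).trans (htop a)
    · exact (reachable_of_col hr fun y _ _ => hout _ (by simp; omega)).symm.trans (htop a)

/-- Parallelogram polyominoes spanning the box `[0, n] × [0, m]` from corner to corner. -/
structure IsStaircase (n m : ℕ) (S : Set (ℤ × ℤ)) : Prop where
  subset_box : S ⊆ box n m
  zero_mem : (0 : ℤ × ℤ) ∈ S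
  corner_mem : ((n : ℤ), (m : ℤ)) ∈ S
  ordConnected_col : ∀ a, {y | (a, y) ∈ S}.OrdConnected
  ordConnected_row : ∀ r, {x | (x, r) ∈ S}.OrdConnected
  reachable : ∀ u ∈ S, (latticeGraphOn S).Reachable 0 u

/-- The vertex set `I_γ`, provided `γ` surrounds `0`. -/
def contourInterior (γ : Finset LatticeEdge) : Set (ℤ × ℤ) :=
  ((complGraph γ).connectedComponentMk 0).supp

lemma normC_natCast (n m : ℕ) : normC ((n : ℤ), (m : ℤ)) = 2 * (n + m + 2) := by
  simp only [normC]
  omega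

namespace IsStaircase

variable {n m : ℕ} {S : Set (ℤ × ℤ)}

lemma finite (hS : IsStaircase n m S) : S.Finite := (Set.finite_Icc _ _).subset hS.subset_box

lemma image_fst (hS : IsStaircase n m S) : Prod.fst '' S = Set.Icc 0 (n : ℤ) := by
  refine subset_antisymm ?_ (Icc_subset_image_of_reachable Prod.fst
    (fun _ _ h => (coord_steps_of_adj h).1.1) hS.zero_mem (hS.reachable _ hS.corner_mem))
  rintro _ ⟨p, hp, rfl⟩
  have := mem_box.1 (hS.subset_box hp)
  exact ⟨this.1, this.2.1⟩

lemma image_snd (hS : IsStaircase n m S) : Prod.snd '' S = Set.Icc 0 (m : ℤ) := by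
  refine subset_antisymm ?_ (Icc_subset_image_of_reachable Prod.snd
    (fun _ _ h => (coord_steps_of_adj h).1.2.1) hS.zero_mem (hS.reachable _ hS.corner_mem))
  rintro _ ⟨p, hp, rfl⟩
  have := mem_box.1 (hS.subset_box hp)
  exact ⟨this.2.2.1, this.2.2.2⟩

theorem mem_gammaN (hS : IsStaircase n m S) {γ : Finset LatticeEdge}
    (hγ : (γ : Set LatticeEdge) = edgeBoundary S) :
    γ ∈ GammaN {0, ((n : ℤ), (m : ℤ))} (normC ((n : ℤ), (m : ℤ))) ∧
      contourInterior γ = S := by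
  obtain ⟨hcont, hsupp⟩ := isContour_of_coe_eq_edgeBoundary hγ hS.finite hS.zero_mem
    (fun u hu => (hS.reachable u hu).mono (latticeGraphOn_le_complGraph hγ))
    (fun u hu w hw => ((reachable_neg_one_of_not_mem hS.subset_box hS.ordConnected_col hu).trans
      (reachable_neg_one_of_not_mem hS.subset_box hS.ordConnected_col hw).symm).mono
        (latticeGraphOn_compl_le_complGraph hγ))
  refine ⟨⟨⟨hcont, _, hsupp ▸ hS.finite, ?_⟩, ?_⟩, hsupp⟩
  · rw [hsupp]
    exact Set.insert_subset hS.zero_mem (Set.singleton_subset_iff.2 hS.corner_mem)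
  · have hle := (card_le_two_mul_ncard_add_iff hS.finite hγ).2
      ⟨hS.ordConnected_col, hS.ordConnected_row⟩
    have hge := two_mul_ncard_add_le_card hS.finite hγ
    rw [hS.image_fst, hS.image_snd, ncard_Icc_natCast, ncard_Icc_natCast] at hle hge
    rw [normC_natCast]
    omega

end IsStaircase

theorem isStaircase_contourInterior {n m : ℕ} {γ : Finset LatticeEdge}
    (hγ : γ ∈ GammaN {0, ((n : ℤ), (m : ℤ))} (normC ((n : ℤ), (m : ℤ)))) :
    IsStaircase n m (contourInterior γ) ∧
      (γ : Set LatticeEdge) = edgeBoundary (contourInterior γ) := by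
  obtain ⟨⟨hcont, C, hCfin, hX⟩, hcard⟩ := hγ
  have h0 : (0 : ℤ × ℤ) ∈ C.supp := hX (Set.mem_insert _ _)
  have hx : ((n : ℤ), (m : ℤ)) ∈ C.supp := hX (Set.mem_insert_of_mem _ rfl)
  rw [show contourInterior γ = C.supp by rw [contourInterior, ← h0]]
  have hbd := coe_eq_edgeBoundary_supp hcont hCfin
  have hreach : ∀ u ∈ C.supp, (latticeGraphOn C.supp).Reachable 0 u := fun u hu =>
    reachable_latticeGraphOn_of_reachable hbd h0 (ConnectedComponent.exact (h0.trans hu.symm))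
  have hfst : Set.Icc 0 (n : ℤ) ⊆ Prod.fst '' C.supp := Icc_subset_image_of_reachable Prod.fst
    (fun _ _ h => (coord_steps_of_adj h).1.1) h0 (hreach _ hx)
  have hsnd : Set.Icc 0 (m : ℤ) ⊆ Prod.snd '' C.supp := Icc_subset_image_of_reachable Prod.snd
    (fun _ _ h => (coord_steps_of_adj h).1.2.1) h0 (hreach _ hx)
  have hA := Set.ncard_le_ncard hfst (hCfin.image _)
  have hB := Set.ncard_le_ncard hsnd (hCfin.image _)
  have hge := two_mul_ncard_add_le_card hCfin hbd
  rw [hcard, normC_natCast] at hge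
  rw [ncard_Icc_natCast] at hA hB
  have hfst_eq := Set.eq_of_subset_of_ncard_le hfst (by rw [ncard_Icc_natCast]; omega)
    (hCfin.image _)
  have hsnd_eq := Set.eq_of_subset_of_ncard_le hsnd (by rw [ncard_Icc_natCast]; omega)
    (hCfin.image _)
  obtain ⟨hcol, hrow⟩ :=
    (card_le_two_mul_ncard_add_iff hCfin hbd).1 (by rw [hcard, normC_natCast]; omega)
  refine ⟨⟨fun p hp => ?_, h0, hx, hcol, hrow, hreach⟩, hbd⟩
  have h₁ : p.1 ∈ Set.Icc 0 (n : ℤ) := hfst_eq ▸ ⟨p, hp, rfl⟩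
  have h₂ : p.2 ∈ Set.Icc 0 (m : ℤ) := hsnd_eq ▸ ⟨p, hp, rfl⟩
  exact mem_box.2 ⟨h₁.1, h₁.2, h₂.1, h₂.2⟩

theorem betaX_eq_card (n m : ℕ) :
    betaX ((n : ℤ), (m : ℤ)) = Nat.card {S | IsStaircase n m S} := by
  refine Nat.card_congr (Set.BijOn.equiv contourInterior ⟨fun γ hγ =>
    (isStaircase_contourInterior hγ).1, fun γ hγ γ' hγ' h => ?_, fun S hS => ?_⟩)
  · exact Finset.coe_injective ((isStaircase_contourInterior hγ).2.trans
      (h ▸ (isStaircase_contourInterior hγ').2.symm))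
  · have hfin := edgeBoundary_finite hS.finite
    exact ⟨hfin.toFinset, hS.mem_gammaN hfin.coe_toFinset⟩

/-! ### Counting staircases -/

namespace IsStaircase

variable {n m : ℕ} {S : Set (ℤ × ℤ)}

lemma exists_mem_col (hS : IsStaircase n m S) {a : ℤ} (ha₀ : 0 ≤ a) (han : a ≤ n) :
    ∃ y, (a, y) ∈ S := by
  obtain ⟨⟨_, y⟩, hy, rfl⟩ : a ∈ Prod.fst '' S := hS.image_fst ▸ ⟨ha₀, han⟩
  exact ⟨y, hy⟩

lemma colMin_colMax_bounds (hS : IsStaircase n m S) {a : ℤ} (ha₀ : 0 ≤ a) (han : a ≤ n) :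
    0 ≤ colMin S a ∧ colMin S a ≤ colMax S a ∧ colMax S a ≤ m := by
  obtain ⟨y, hy⟩ := hS.exists_mem_col ha₀ han
  exact ⟨(mem_box.1 (hS.subset_box (mk_colMin_mem hS.finite hy))).2.2.1,
    (colMin_le hS.finite hy).trans (le_colMax hS.finite hy),
    (mem_box.1 (hS.subset_box (mk_colMax_mem hS.finite hy))).2.2.2⟩

/-- Otherwise a walk from `0` to the bottom of column `a'` would have to pass below the bottom
of column `a`, or through row `colMin S a'` left of column `a`. -/
theorem colMin_mono (hS : IsStaircase n m S) {a a' : ℤ} (ha : 0 ≤ a) (haa' : a ≤ a')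
    (ha' : a' ≤ n) : colMin S a ≤ colMin S a' := by
  rcases haa'.eq_or_lt with rfl | haa'
  · exact le_rfl
  by_contra! hlt
  obtain ⟨y, hy⟩ := hS.exists_mem_col (ha.trans haa'.le) ha'
  have hr := mk_colMin_mem hS.finite hy
  obtain ⟨p⟩ := hS.reachable _ hr
  obtain ⟨w, hw, hw'⟩ := p.exists_mem_support_of_quadrant Prod.fst Prod.snd
    (fun u v h => (coord_steps_of_adj (latticeGraphOn_le S h)).1) (a := a) (r := colMin S a')
    ⟨ha, (mem_box.1 (hS.subset_box hr)).2.2.1⟩ haa'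
  have hwS := mem_of_mem_support p hS.zero_mem hw
  rcases hw' with ⟨h₁, h₂⟩ | ⟨h₁, h₂⟩
  · have := colMin_le hS.finite (show (a, w.2) ∈ S from h₁ ▸ hwS)
    omega
  · have := colMin_le hS.finite ((hS.ordConnected_row _).out
      (show (w.1, colMin S a') ∈ S from h₂ ▸ hwS) hr ⟨h₁, haa'.le⟩)
    omega

/-- The mirror image of `colMin_mono`, with the walk coming from the corner `(n, m)`. -/
theorem colMax_mono (hS : IsStaircase n m S) {a a' : ℤ} (ha : 0 ≤ a) (haa' : a ≤ a')
    (ha' : a' ≤ n) : colMax S a ≤ colMax S a' := by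
  rcases haa'.eq_or_lt with rfl | haa'
  · exact le_rfl
  by_contra! hlt
  obtain ⟨y, hy⟩ := hS.exists_mem_col ha (haa'.le.trans ha')
  have hr := mk_colMax_mem hS.finite hy
  obtain ⟨p⟩ := (hS.reachable _ hS.corner_mem).symm.trans (hS.reachable _ hr)
  obtain ⟨w, hw, hw'⟩ := p.exists_mem_support_of_quadrant (fun q => -q.1) (fun q => -q.2)
    (fun u v h => (coord_steps_of_adj (latticeGraphOn_le S h)).2) (a := -a') (r := -colMax S a)
    ⟨by simpa using ha', by simpa using (mem_box.1 (hS.subset_box hr)).2.2.2⟩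
    (by simpa using haa')
  have hwS := mem_of_mem_support p hS.corner_mem hw
  rcases hw' with ⟨h₁, h₂⟩ | ⟨h₁, h₂⟩
  · have := le_colMax hS.finite (show (a', w.2) ∈ S from neg_inj.1 h₁ ▸ hwS)
    omega
  · have := le_colMax hS.finite ((hS.ordConnected_row _).out hr
      (show (w.1, colMax S a) ∈ S from neg_inj.1 h₂ ▸ hwS) ⟨haa'.le, by omega⟩)
    omega

lemma mem_iff (hS : IsStaircase n m S) {p : ℤ × ℤ} :
    p ∈ S ↔ (0 ≤ p.1 ∧ p.1 ≤ n) ∧ colMin S p.1 ≤ p.2 ∧ p.2 ≤ colMax S p.1 := by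
  refine ⟨fun hp => ⟨?_, colMin_le hS.finite hp, le_colMax hS.finite hp⟩,
    fun ⟨ha, h₁, h₂⟩ => ?_⟩
  · have := mem_box.1 (hS.subset_box hp)
    exact ⟨this.1, this.2.1⟩
  · obtain ⟨y, hy⟩ := hS.exists_mem_col ha.1 ha.2
    exact (hS.ordConnected_col p.1).out (mk_colMin_mem hS.finite hy)
      (mk_colMax_mem hS.finite hy) ⟨h₁, h₂⟩

end IsStaircase

/-- The lower and upper boundary paths of a staircase, each encoded by the positions
`i + height` of its horizontal steps, a subset of `[0, n + m]`. -/
noncomputable def pathCode (n : ℕ) (S : Set (ℤ × ℤ)) : Finset ℤ × Finset ℤ :=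
  (Finset.univ.image fun i : Fin (n + 1) => (i : ℤ) + colMin S i,
    Finset.univ.image fun i : Fin (n + 1) => (i : ℤ) + colMax S i)

lemma pathCode_injOn (n m : ℕ) : Set.InjOn (pathCode n) {S | IsStaircase n m S} := by
  intro S hS S' hS' h
  have hmono : ∀ {T : Set (ℤ × ℤ)}, IsStaircase n m T →
      Monotone (fun i : Fin (n + 1) => colMin T i) ∧
        Monotone (fun i : Fin (n + 1) => colMax T i) := fun hT =>
    ⟨fun i j hij => hT.colMin_mono (by positivity) (by exact_mod_cast hij)
      (by have := j.isLt; omega),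
     fun i j hij => hT.colMax_mono (by positivity) (by exact_mod_cast hij)
      (by have := j.isLt; omega)⟩
  have hmin := eq_of_image_add_eq (hmono hS).1 (hmono hS').1 (congrArg Prod.fst h)
  have hmax := eq_of_image_add_eq (hmono hS).2 (hmono hS').2 (congrArg Prod.snd h)
  ext ⟨a, y⟩
  rw [hS.mem_iff, hS'.mem_iff]
  refine and_congr_right fun ha => ?_
  have hi := congrFun hmin ⟨a.toNat, by omega⟩
  have hi' := congrFun hmax ⟨a.toNat, by omega⟩
  simp only [Int.toNat_of_nonneg ha.1] at hi hi'
  rw [hi, hi']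

theorem card_setOf_isStaircase_le (n m : ℕ) :
    Nat.card {S | IsStaircase n m S} ≤ 4 ^ (n + m + 1) := by
  set P := (Finset.Icc (0 : ℤ) (n + m)).powerset
  have hmaps :
      ∀ S ∈ {S | IsStaircase n m S}, pathCode n S ∈ ((P ×ˢ P : Finset _) : Set _) := by
    intro S hS
    simp only [Finset.coe_product, Set.mem_prod, Finset.mem_coe, P, Finset.mem_powerset,
      pathCode, Finset.image_subset_iff, Finset.mem_univ, Finset.mem_Icc, forall_const]
    refine ⟨fun i => ?_, fun i => ?_⟩ <;>
      have := hS.colMin_colMax_bounds (a := i) (by positivity) (by have := i.isLt; omega) <;>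
      omega
  rw [Nat.card_coe_set_eq]
  calc _ ≤ ((P ×ˢ P : Finset _) : Set (Finset ℤ × Finset ℤ)).ncard :=
        Set.ncard_le_ncard_of_injOn _ hmaps (pathCode_injOn n m)
    _ = 4 ^ (n + m + 1) := by
        rw [Set.ncard_coe_finset, Finset.card_product, Finset.card_powerset, Int.card_Icc,
          ← mul_pow]
        norm_num
        omega

theorem isStaircase_box (n m : ℕ) : IsStaircase n m (box n m) where
  subset_box := subset_rfl
  zero_mem := mem_box.2 (by simp)
  corner_mem := mem_box.2 (by simp)
  ordConnected_col a := ⟨fun y₁ h₁ y₂ h₂ y hy => mem_box.2 (by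
    have := mem_box.1 h₁; have := mem_box.1 h₂; have := hy.1; have := hy.2; simp_all; omega)⟩
  ordConnected_row r := ⟨fun x₁ h₁ x₂ h₂ x hx => mem_box.2 (by
    have := mem_box.1 h₁; have := mem_box.1 h₂; have := hx.1; have := hx.2; simp_all; omega)⟩
  reachable := by
    rintro ⟨a, r⟩ hu
    have := mem_box.1 hu
    exact (reachable_of_row (r := 0) this.1 fun x _ _ => mem_box.2 (by simp; omega)).trans
      (reachable_of_col this.2.2.1 fun y _ _ => mem_box.2 (by simp; omega))

def glue (n m : ℕ) (S T : Set (ℤ × ℤ)) : Set (ℤ × ℤ) :=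
  S ∪ {p | p - ((n : ℤ), (m : ℤ)) ∈ T}

section Glue

variable {n m n' m' : ℕ} {S T : Set (ℤ × ℤ)}

lemma le_of_mem_of_sub_mem (hS : IsStaircase n m S) (hT : IsStaircase n' m' T) {p q : ℤ × ℤ}
    (hp : p ∈ S) (hq : q - ((n : ℤ), (m : ℤ)) ∈ T) :
    p.1 ≤ n ∧ p.2 ≤ m ∧ (n : ℤ) ≤ q.1 ∧ (m : ℤ) ≤ q.2 := by
  have := mem_box.1 (hS.subset_box hp)
  have := mem_box.1 (hT.subset_box hq)
  simp only [Prod.fst_sub, Prod.snd_sub] at this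
  omega

theorem IsStaircase.glue (hS : IsStaircase n m S) (hT : IsStaircase n' m' T) :
    IsStaircase (n + n') (m + m') (glue n m S T) where
  subset_box := by
    rintro p (hp | hp)
    · have := mem_box.1 (hS.subset_box hp)
      exact mem_box.2 (by push_cast; omega)
    · have := mem_box.1 (hT.subset_box hp)
      simp only [Prod.fst_sub, Prod.snd_sub] at this
      exact mem_box.2 (by push_cast; omega)
  zero_mem := Or.inl hS.zero_mem
  corner_mem := Or.inr (by simpa using hT.corner_mem)
  ordConnected_col a := (hS.ordConnected_col a).union
    ⟨fun _ h₁ _ h₂ y hy => (hT.ordConnected_col (a - n)).out h₁ h₂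
      ⟨by simp [hy.1], by simp [hy.2]⟩⟩ fun ⟨_, h₁⟩ ⟨_, h₂⟩ => by
    obtain rfl : a = n := by have := le_of_mem_of_sub_mem hS hT h₁ h₂; omega
    exact ⟨m, hS.corner_mem, show (_, _) - (_, _) ∈ T by simpa using hT.zero_mem⟩
  ordConnected_row r := (hS.ordConnected_row r).union
    ⟨fun _ h₁ _ h₂ x hx => (hT.ordConnected_row (r - m)).out h₁ h₂
      ⟨by simp [hx.1], by simp [hx.2]⟩⟩ fun ⟨_, h₁⟩ ⟨_, h₂⟩ => by
    obtain rfl : r = m := by have := le_of_mem_of_sub_mem hS hT h₁ h₂; omega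
    exact ⟨n, hS.corner_mem, show (_, _) - (_, _) ∈ T by simpa using hT.zero_mem⟩
  reachable := by
    have hS' := fun u hu => (hS.reachable u hu).mono
      (latticeGraphOn_mono (T := MinimalContour.glue n m S T) Set.subset_union_left)
    rintro u (hu | hu)
    · exact hS' u hu
    · have := reachable_add (T' := MinimalContour.glue n m S T) ((n : ℤ), (m : ℤ))
        (fun p hp => Or.inr (by simpa using hp)) (hT.reachable _ hu)
      simp only [zero_add, sub_add_cancel] at this
      exact (hS' _ hS.corner_mem).trans this

lemma glue_inter_box (hS : IsStaircase n m S) (hT : IsStaircase n' m' T) :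
    glue n m S T ∩ box n m = S := by
  refine subset_antisymm (fun p ⟨hp, hpbox⟩ => hp.elim id fun hpT => ?_)
    fun p hp => ⟨Or.inl hp, hS.subset_box hp⟩
  have := le_of_mem_of_sub_mem hS hT hS.corner_mem hpT
  have := mem_box.1 hpbox
  obtain rfl : p = ((n : ℤ), (m : ℤ)) := Prod.ext (by simp only; omega) (by simp only; omega)
  exact hS.corner_mem

lemma add_mem_glue_iff (hS : IsStaircase n m S) (hT : IsStaircase n' m' T) {q : ℤ × ℤ} :
    (q + ((n : ℤ), (m : ℤ)) ∈ glue n m S T ∧ 0 ≤ q.1 ∧ 0 ≤ q.2) ↔ q ∈ T := by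
  refine ⟨fun ⟨hq, hq₁, hq₂⟩ => hq.elim (fun hqS => ?_) (by simp), fun hq =>
    ⟨Or.inr (by simpa using hq), (mem_box.1 (hT.subset_box hq)).1,
      (mem_box.1 (hT.subset_box hq)).2.2.1⟩⟩
  have := le_of_mem_of_sub_mem hS hT hqS (q := ((n : ℤ), (m : ℤ))) (by simpa using hT.zero_mem)
  simp only [Prod.fst_add, Prod.snd_add] at this
  obtain rfl : q = 0 := Prod.ext (by simp only [Prod.fst_zero]; omega)
    (by simp only [Prod.snd_zero]; omega)
  exact hT.zero_mem

end Glue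

lemma setOf_isStaircase_finite (n m : ℕ) : {S | IsStaircase n m S}.Finite :=
  (Set.finite_Icc _ _).finite_subsets.subset fun _ hS => hS.subset_box

theorem card_setOf_isStaircase_mul_le (n m n' m' : ℕ) :
    Nat.card {S | IsStaircase n m S} * Nat.card {T | IsStaircase n' m' T} ≤
      Nat.card {U | IsStaircase (n + n') (m + m') U} := by
  have := (setOf_isStaircase_finite (n + n') (m + m')).to_subtype
  rw [← Nat.card_prod]
  refine Nat.card_le_card_of_injective (fun q => ⟨glue n m q.1 q.2, q.1.2.glue q.2.2⟩) ?_
  rintro ⟨⟨S, hS⟩, ⟨T, hT⟩⟩ ⟨⟨S', hS'⟩, ⟨T', hT'⟩⟩ h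
  have h : glue n m S T = glue n m S' T' := congrArg Subtype.val h
  obtain rfl : S = S' := by rw [← glue_inter_box hS hT, h, glue_inter_box hS' hT']
  obtain rfl : T = T' := by ext q; rw [← add_mem_glue_iff hS hT, h, add_mem_glue_iff hS' hT']
  rfl

theorem one_le_betaX (n m : ℕ) : 1 ≤ betaX ((n : ℤ), (m : ℤ)) := by
  have := (setOf_isStaircase_finite n m).to_subtype
  have : Nonempty {S | IsStaircase n m S} := ⟨⟨_, isStaircase_box n m⟩⟩
  rw [betaX_eq_card]
  exact Nat.card_pos

theorem betaX_le (n m : ℕ) : betaX ((n : ℤ), (m : ℤ)) ≤ 4 ^ (n + m + 1) :=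
  betaX_eq_card n m ▸ card_setOf_isStaircase_le n m

theorem betaX_mul_betaX_le (n m n' m' : ℕ) :
    betaX ((n : ℤ), (m : ℤ)) * betaX ((n' : ℤ), (m' : ℤ)) ≤
      betaX (((n + n' : ℕ) : ℤ), ((m + m' : ℕ) : ℤ)) := by
  simpa only [betaX_eq_card] using card_setOf_isStaircase_mul_le n m n' m'

end MinimalContour

theorem betaX_root_tendsto_general (ρ : ℕ) :
    ∃ α : ℝ, 1 ≤ α ∧ α ≤ 4 ^ (1 + ρ) ∧
      Filter.Tendsto (fun n : ℕ => (betaX ((n : ℤ), ((ρ * n : ℕ) : ℤ)) : ℝ) ^ (1 / (n : ℝ)))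
        Filter.atTop (nhds α) := by
  refine exists_tendsto_rpow_one_div_of_supermultiplicative (C := 4)
    (fun k => mod_cast MinimalContour.one_le_betaX k (ρ * k)) (fun k l => ?_) (fun k => ?_)
  · have := MinimalContour.betaX_mul_betaX_le k (ρ * k) l (ρ * l)
    rw [← mul_add] at this
    exact_mod_cast this
  · calc (betaX ((k : ℤ), ((ρ * k : ℕ) : ℤ)) : ℝ) ≤ (4 : ℝ) ^ (k + ρ * k + 1) :=
        mod_cast MinimalContour.betaX_le k (ρ * k)
      _ = 4 * (4 ^ (1 + ρ)) ^ k := by ring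

/-- For a fixed positive integer `ρ`, with `α_n = β_{(n, ρn)}`,
the limit `α = lim_{n→∞} α_n^{1/n}` exists and `1 ≤ α ≤ 4^{1+ρ}`. -/
theorem betaX_root_tendsto (ρ : ℕ) (hρ : 1 ≤ ρ) :
    ∃ α : ℝ, 1 ≤ α ∧ α ≤ 4 ^ (1 + ρ) ∧
      Filter.Tendsto (fun n : ℕ => (betaX ((n : ℤ), ((ρ * n : ℕ) : ℤ)) : ℝ) ^ (1 / (n : ℝ)))
        Filter.atTop (nhds α) :=
  betaX_root_tendsto_general ρ
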